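/- Assume f, h, l and V_f are continuous, l ≥ 0, 𝕏 is compact, 𝕌 is compact, 𝕏_f is closed, contains an open neighborhood of the origin, and is controlled invariant; assume N(x) is defined for every x ∈ 𝕏 and there is M ∈ ℕ with N(x) ≤ M for all x ∈ 𝕏. If there exists a class-K∞ function α such that V⁰_N(x) ≤ α(|x|) for all x ∈ 𝕏_f and all N = 0, 1, …, M, then there exists a class-K∞ function β such that V(x) ≤ β(|x|) for all x ∈ 𝕏. -/

import Mathlib

/-!
Outside a ball of radius `r` contained in `Xf`, the value function is bounded by a constant `C`:
every state of `X` reaches `Xf` in at most `M` steps, and along the way `l` is bounded on the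
compact set `X × U` and `Vf` on the compact set `Xf`. Inside the ball `N(x) = 0`, so
`V(x) = V⁰₀(x) ≤ α(|x|)`. Hence `β(s) = α(s) + (C / r) s` works.
-/

open Set Filter Topology

/-- The state/control spaces are Euclidean spaces. -/
abbrev Vec (n : ℕ) := EuclideanSpace ℝ (Fin n)

/-- A control `u` is feasible at a state `x` if `u ∈ U`, `f x u ∈ X` and `h x u ∈ Y`. -/
def Feas {n m p : ℕ} (f : Vec n → Vec m → Vec n) (h : Vec n → Vec m → Vec p)
    (X : Set (Vec n)) (U : Set (Vec m)) (Y : Set (Vec p))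
    (x : Vec n) (u : Vec m) : Prop :=
  u ∈ U ∧ f x u ∈ X ∧ h x u ∈ Y

/-- The trajectory from `x` under the control sequence `u`: `x(0) = x`, `x(k+1) = f (x k) (u k)`. -/
def traj {n m : ℕ} (f : Vec n → Vec m → Vec n) (x : Vec n) (u : ℕ → Vec m) : ℕ → Vec n
  | 0 => x
  | k + 1 => f (traj f x u k) (u k)

/-- A control sequence `u(0), …, u(N-1)` is feasible from `x` if each `u k` is feasible at `x(k)`. -/
def FeasSeq {n m p : ℕ} (f : Vec n → Vec m → Vec n) (h : Vec n → Vec m → Vec p)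
    (X : Set (Vec n)) (U : Set (Vec m)) (Y : Set (Vec p))
    (x : Vec n) (N : ℕ) (u : ℕ → Vec m) : Prop :=
  ∀ k < N, Feas f h X U Y (traj f x u k) (u k)

/-- The sets `X_N`: `X_0 = Xf`, and `X_{N+1} = {x ∈ X : ∃ u feasible at x, f x u ∈ X_N}`. -/
def XN {n m p : ℕ} (f : Vec n → Vec m → Vec n) (h : Vec n → Vec m → Vec p)
    (X : Set (Vec n)) (U : Set (Vec m)) (Y : Set (Vec p)) (Xf : Set (Vec n)) :
    ℕ → Set (Vec n)
  | 0 => Xf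
  | N + 1 => {x | x ∈ X ∧ ∃ u, Feas f h X U Y x u ∧ f x u ∈ XN f h X U Y Xf N}

/-- `Xf` is controlled invariant. -/
def CtrlInv {n m p : ℕ} (f : Vec n → Vec m → Vec n) (h : Vec n → Vec m → Vec p)
    (X : Set (Vec n)) (U : Set (Vec m)) (Y : Set (Vec p)) (Xf : Set (Vec n)) : Prop :=
  ∀ x ∈ Xf, ∃ u, Feas f h X U Y x u ∧ f x u ∈ Xf

/-- The set of horizons `N` for which some feasible control sequence of length `N`
from `x` has trajectory ending in `Xf`. -/
def HorizonSet {n m p : ℕ} (f : Vec n → Vec m → Vec n) (h : Vec n → Vec m → Vec p)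
    (X : Set (Vec n)) (U : Set (Vec m)) (Y : Set (Vec p)) (Xf : Set (Vec n))
    (x : Vec n) : Set ℕ :=
  {N | ∃ u : ℕ → Vec m, FeasSeq f h X U Y x N u ∧ traj f x u N ∈ Xf}

/-- `N(x)`: the least horizon for which a feasible control sequence from `x` ends in `Xf`. -/
noncomputable def Nmin {n m p : ℕ} (f : Vec n → Vec m → Vec n) (h : Vec n → Vec m → Vec p)
    (X : Set (Vec n)) (U : Set (Vec m)) (Y : Set (Vec p)) (Xf : Set (Vec n))
    (x : Vec n) : ℕ :=
  sInf (HorizonSet f h X U Y Xf x)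

/-- The horizon-`N` cost of the control sequence `u` from `x`. -/
noncomputable def cost {n m : ℕ} (f : Vec n → Vec m → Vec n)
    (l : Vec n → Vec m → ℝ) (Vf : Vec n → ℝ) (x : Vec n) (N : ℕ) (u : ℕ → Vec m) : ℝ :=
  (∑ k ∈ Finset.range N, l (traj f x u k) (u k)) + Vf (traj f x u N)

/-- The horizon-`N` optimal cost `V⁰_N(x)`: the infimum of the cost over all feasible
control sequences of length `N` from `x` whose trajectory ends in `Xf`. -/
noncomputable def Vopt {n m p : ℕ} (f : Vec n → Vec m → Vec n) (h : Vec n → Vec m → Vec p)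
    (X : Set (Vec n)) (U : Set (Vec m)) (Y : Set (Vec p)) (Xf : Set (Vec n))
    (l : Vec n → Vec m → ℝ) (Vf : Vec n → ℝ) (N : ℕ) (x : Vec n) : ℝ :=
  sInf {c : ℝ | ∃ u : ℕ → Vec m,
    FeasSeq f h X U Y x N u ∧ traj f x u N ∈ Xf ∧ c = cost f l Vf x N u}

/-- Assumption 3: for every `x ∈ Xf` there is a feasible `u` with `f x u ∈ Xf` and
`l x u + Vf (f x u) ≤ Vf x`. -/
def Assumption3 {n m p : ℕ} (f : Vec n → Vec m → Vec n) (h : Vec n → Vec m → Vec p)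
    (X : Set (Vec n)) (U : Set (Vec m)) (Y : Set (Vec p)) (Xf : Set (Vec n))
    (l : Vec n → Vec m → ℝ) (Vf : Vec n → ℝ) : Prop :=
  ∀ x ∈ Xf, ∃ u, Feas f h X U Y x u ∧ f x u ∈ Xf ∧ l x u + Vf (f x u) ≤ Vf x

/-- A function `α : [0,∞) → [0,∞)` is of class `K∞` if it is continuous, strictly
increasing, `α 0 = 0` and `α s → ∞` as `s → ∞`. -/
def IsKInf (α : ℝ → ℝ) : Prop :=
  ContinuousOn α (Ici 0) ∧ StrictMonoOn α (Ici 0) ∧ α 0 = 0 ∧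
    Tendsto α atTop atTop ∧ ∀ s ∈ Ici (0 : ℝ), 0 ≤ α s

theorem IsKInf.add_const_mul {α : ℝ → ℝ} (hα : IsKInf α) {c : ℝ} (hc : 0 ≤ c) :
    IsKInf fun s => α s + c * s := by
  obtain ⟨hcont, hmono, hzero, htend, hnonneg⟩ := hα
  refine ⟨hcont.add (continuous_const.mul continuous_id).continuousOn, ?_, by simp [hzero], ?_,
    fun s hs => add_nonneg (hnonneg s hs) (mul_nonneg hc hs)⟩
  · exact fun a ha b hb hab => add_lt_add_of_lt_of_le (hmono ha hb hab)
      (mul_le_mul_of_nonneg_left hab.le hc)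
  · refine htend.atTop_add_zero_eventuallyLE ?_
    filter_upwards [eventually_ge_atTop 0] with s hs
    exact mul_nonneg hc hs

theorem exists_isKInf_bound_of_bounded {E : Type*} [SeminormedAddCommGroup E] {S : Set E}
    {V : E → ℝ} {α : ℝ → ℝ} (hα : IsKInf α) {r C : ℝ} (hr : 0 < r) (hC : 0 ≤ C)
    (hnear : ∀ x ∈ S, ‖x‖ < r → V x ≤ α ‖x‖) (hbdd : ∀ x ∈ S, V x ≤ C) :
    ∃ β : ℝ → ℝ, IsKInf β ∧ ∀ x ∈ S, V x ≤ β ‖x‖ := by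
  have hCr : 0 ≤ C / r := div_nonneg hC hr.le
  refine ⟨fun s => α s + C / r * s, hα.add_const_mul hCr, fun x hx => ?_⟩
  rcases lt_or_ge ‖x‖ r with hxr | hxr
  · linarith [hnear x hx hxr, mul_nonneg hCr (norm_nonneg x)]
  · have hC_le : C ≤ C / r * ‖x‖ := by
      rw [div_mul_eq_mul_div, le_div_iff₀ hr]
      exact mul_le_mul_of_nonneg_left hxr hC
    linarith [hbdd x hx, hα.2.2.2.2 ‖x‖ (norm_nonneg x)]

section ValueFunction

variable {n m p : ℕ} {f : Vec n → Vec m → Vec n} {h : Vec n → Vec m → Vec p}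
  {X : Set (Vec n)} {U : Set (Vec m)} {Y : Set (Vec p)} {Xf : Set (Vec n)}
  {l : Vec n → Vec m → ℝ} {Vf : Vec n → ℝ}

theorem FeasSeq.traj_mem {x : Vec n} {N : ℕ} {u : ℕ → Vec m}
    (hu : FeasSeq f h X U Y x N u) (hx : x ∈ X) : ∀ k ≤ N, traj f x u k ∈ X
  | 0, _ => hx
  | k + 1, hk => (hu k hk).2.1

theorem FeasSeq.cost_le {x : Vec n} {N : ℕ} {u : ℕ → Vec m} {L B : ℝ}
    (hu : FeasSeq f h X U Y x N u) (hx : x ∈ X) (hend : traj f x u N ∈ Xf)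
    (hL : ∀ y ∈ X, ∀ v ∈ U, l y v ≤ L) (hB : ∀ y ∈ Xf, Vf y ≤ B) :
    cost f l Vf x N u ≤ N * L + B := by
  have hsum : ∑ k ∈ Finset.range N, l (traj f x u k) (u k) ≤ N * L := by
    calc ∑ k ∈ Finset.range N, l (traj f x u k) (u k)
        ≤ ∑ _k ∈ Finset.range N, L := Finset.sum_le_sum fun k hk =>
          hL _ (hu.traj_mem hx k (Finset.mem_range.mp hk).le) _ (hu k (Finset.mem_range.mp hk)).1
      _ = N * L := by simp
  exact add_le_add hsum (hB _ hend)

theorem Vopt_le_cost (hlnn : ∀ x u, 0 ≤ l x u) (hVf : BddBelow (Vf '' Xf)) {x : Vec n}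
    {N : ℕ} {u : ℕ → Vec m} (hu : FeasSeq f h X U Y x N u) (hend : traj f x u N ∈ Xf) :
    Vopt f h X U Y Xf l Vf N x ≤ cost f l Vf x N u := by
  obtain ⟨B₀, hB₀⟩ := hVf
  refine csInf_le ⟨B₀, ?_⟩ ⟨u, hu, hend, rfl⟩
  rintro c ⟨v, -, hvend, rfl⟩
  have hsum : 0 ≤ ∑ k ∈ Finset.range N, l (traj f x v k) (v k) :=
    Finset.sum_nonneg fun _ _ => hlnn _ _
  exact le_add_of_nonneg_of_le hsum (hB₀ ⟨_, hvend, rfl⟩)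

theorem Nmin_eq_zero_of_mem {x : Vec n} (hx : x ∈ Xf) : Nmin f h X U Y Xf x = 0 :=
  Nat.sInf_eq_zero.mpr (Or.inl ⟨fun _ => 0, fun _ hk => absurd hk (Nat.not_lt_zero _), hx⟩)

theorem exists_Vopt_Nmin_le (hXfX : Xf ⊆ X)
    (hl : Continuous fun q : Vec n × Vec m => l q.1 q.2) (hVf : Continuous Vf)
    (hlnn : ∀ x u, 0 ≤ l x u) (hX : IsCompact X) (hU : IsCompact U) (hXf : IsClosed Xf)
    (hreach : ∀ x ∈ X, (HorizonSet f h X U Y Xf x).Nonempty)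
    {M : ℕ} (hM : ∀ x ∈ X, Nmin f h X U Y Xf x ≤ M) :
    ∃ C, 0 ≤ C ∧ ∀ x ∈ X, Vopt f h X U Y Xf l Vf (Nmin f h X U Y Xf x) x ≤ C := by
  obtain ⟨L, hL⟩ := (hX.prod hU).bddAbove_image hl.continuousOn
  have hXf_compact : IsCompact Xf := hX.of_isClosed_subset hXf hXfX
  obtain ⟨B, hB⟩ := hXf_compact.bddAbove_image hVf.continuousOn
  refine ⟨max (M * max L 0 + B) 0, le_max_right _ _, fun x hx => ?_⟩
  obtain ⟨u, hu, hend⟩ : Nmin f h X U Y Xf x ∈ HorizonSet f h X U Y Xf x :=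
    Nat.sInf_mem (hreach x hx)
  have hcost := hu.cost_le hx hend (L := max L 0)
    (fun y hy v hv => (hL ⟨(y, v), ⟨hy, hv⟩, rfl⟩).trans (le_max_left _ _))
    (fun y hy => hB ⟨y, hy, rfl⟩)
  have hNM : (Nmin f h X U Y Xf x : ℝ) * max L 0 ≤ M * max L 0 :=
    mul_le_mul_of_nonneg_right (by exact_mod_cast hM x hx) (le_max_right _ _)
  calc Vopt f h X U Y Xf l Vf _ x ≤ cost f l Vf x _ u :=
        Vopt_le_cost hlnn (hXf_compact.bddBelow_image hVf.continuousOn) hu hend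
    _ ≤ M * max L 0 + B := by linarith
    _ ≤ _ := le_max_left _ _

end ValueFunction

theorem stmt_6_general {n m p : ℕ} (f : Vec n → Vec m → Vec n) (h : Vec n → Vec m → Vec p)
    (X : Set (Vec n)) (U : Set (Vec m)) (Y : Set (Vec p)) (Xf : Set (Vec n))
    (l : Vec n → Vec m → ℝ) (Vf : Vec n → ℝ)
    (hXfX : Xf ⊆ X)
    (hl : Continuous fun q : Vec n × Vec m => l q.1 q.2)
    (hVf : Continuous Vf)
    (hlnn : ∀ x u, 0 ≤ l x u)
    (hX : IsCompact X) (hU : IsCompact U) (hXfclosed : IsClosed Xf)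
    (hXfnbhd : Xf ∈ 𝓝 (0 : Vec n))
    (hreach : ∀ x ∈ X, (HorizonSet f h X U Y Xf x).Nonempty)
    (M : ℕ) (hM : ∀ x ∈ X, Nmin f h X U Y Xf x ≤ M)
    (α : ℝ → ℝ) (hα : IsKInf α)
    (hbound : ∀ N ≤ M, ∀ x ∈ Xf, Vopt f h X U Y Xf l Vf N x ≤ α ‖x‖) :
    ∃ β : ℝ → ℝ, IsKInf β ∧
      ∀ x ∈ X, Vopt f h X U Y Xf l Vf (Nmin f h X U Y Xf x) x ≤ β ‖x‖ := by
  obtain ⟨C, hC, hVC⟩ := exists_Vopt_Nmin_le hXfX hl hVf hlnn hX hU hXfclosed hreach hM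
  obtain ⟨r, hr, hball⟩ := Metric.mem_nhds_iff.mp hXfnbhd
  refine exists_isKInf_bound_of_bounded hα hr hC (fun x _ hxr => ?_) hVC
  have hxXf : x ∈ Xf := hball (mem_ball_zero_iff.mpr hxr)
  rw [Nmin_eq_zero_of_mem hxXf]
  exact hbound 0 M.zero_le x hxXf

/-- Proposition 3: with `f, h, l, Vf` continuous, `l ≥ 0`, `X` and `U`
compact, `Xf` closed, containing an open neighborhood of the origin and controlled
invariant, `N(·)` defined on all of `X` and bounded by `M`: if there is a class-K∞
function `α` with `V⁰_N(x) ≤ α(|x|)` on `Xf` for all `N ≤ M`, then there is a class-K∞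
function `β` with `V(x) = V⁰_{N(x)}(x) ≤ β(|x|)` for all `x ∈ X`. -/
theorem stmt_6 {n m p : ℕ} (f : Vec n → Vec m → Vec n) (h : Vec n → Vec m → Vec p)
    (X : Set (Vec n)) (U : Set (Vec m)) (Y : Set (Vec p)) (Xf : Set (Vec n))
    (l : Vec n → Vec m → ℝ) (Vf : Vec n → ℝ)
    (hXfX : Xf ⊆ X)
    (hf : Continuous fun q : Vec n × Vec m => f q.1 q.2)
    (hh : Continuous fun q : Vec n × Vec m => h q.1 q.2)
    (hl : Continuous fun q : Vec n × Vec m => l q.1 q.2)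
    (hVf : Continuous Vf)
    (hlnn : ∀ x u, 0 ≤ l x u)
    (hX : IsCompact X) (hU : IsCompact U) (hXfclosed : IsClosed Xf)
    (hXfnbhd : Xf ∈ 𝓝 (0 : Vec n))
    (hinv : CtrlInv f h X U Y Xf)
    (hreach : ∀ x ∈ X, (HorizonSet f h X U Y Xf x).Nonempty)
    (M : ℕ) (hM : ∀ x ∈ X, Nmin f h X U Y Xf x ≤ M)
    (α : ℝ → ℝ) (hα : IsKInf α)
    (hbound : ∀ N ≤ M, ∀ x ∈ Xf, Vopt f h X U Y Xf l Vf N x ≤ α ‖x‖) :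
    ∃ β : ℝ → ℝ, IsKInf β ∧
      ∀ x ∈ X, Vopt f h X U Y Xf l Vf (Nmin f h X U Y Xf x) x ≤ β ‖x‖ :=
  stmt_6_general f h X U Y Xf l Vf hXfX hl hVf hlnn hX hU hXfclosed hXfnbhd hreach M hM α hα hbound
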